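/- arXiv:2011.09830 — 7 statements merged into one kernel-verified Lean document; each statement's English description precedes it below -/
import Mathlib

section
/- Let φ be a continuous flow on a compact metric space and B ⊆ X a stable set. Then the complementary set B• := {x ∈ X : ω(x) ∩ B = ∅} is invariant (i.e., φ_t(B•) = B• for all t ∈ ℝ) and disjoint from B. -/
open Set Metric Topology MeasureTheory

/-- A continuous flow on `X`: jointly continuous, `φ 0 = id`, group property. -/
def IsFlow {X : Type*} [TopologicalSpace X] (φ : ℝ → X → X) : Prop :=
  Continuous (fun p : X × ℝ => φ p.2 p.1) ∧ (∀ x, φ 0 x = x) ∧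
    ∀ s t x, φ (s + t) x = φ s (φ t x)

/-- Forward invariance of a set under the flow. -/
def FwdInvariant {X : Type*} (φ : ℝ → X → X) (S : Set X) : Prop :=
  ∀ t, 0 ≤ t → ∀ x ∈ S, φ t x ∈ S

/-- The omega-limit set of a point. -/
def omegaPt {X : Type*} [TopologicalSpace X] (φ : ℝ → X → X) (x : X) : Set X :=
  ⋂ T : ℝ, closure {y | ∃ t, T ≤ t ∧ φ t x = y}

/-- The omega-limit set of a set. -/
def omegaSet {X : Type*} [TopologicalSpace X] (φ : ℝ → X → X) (U : Set X) : Set X :=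
  ⋂ T : ℝ, closure {y | ∃ t, T ≤ t ∧ ∃ u ∈ U, φ t u = y}

/-- The complementary set `B• = {x : ω(x) ∩ B = ∅}`. -/
def bulletSet {X : Type*} [TopologicalSpace X] (φ : ℝ → X → X) (B : Set X) : Set X :=
  {x | omegaPt φ x ∩ B = ∅}

/-- A closed set is stable if it has a neighborhood base of forward invariant sets. -/
def IsStable {X : Type*} [TopologicalSpace X] (φ : ℝ → X → X) (B : Set X) : Prop :=
  IsClosed B ∧ ∀ N ∈ nhdsSet B, ∃ V ∈ nhdsSet B, FwdInvariant φ V ∧ V ⊆ N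

/-- A strongly stable set, via a family of closed nested neighborhoods `U η`, `η ∈ (0,1)`,
and times `T η` bounded on compact subsets of `(0,1)`. -/
def StronglyStable {X : Type*} [MetricSpace X] (φ : ℝ → X → X) (B : Set X) : Prop :=
  IsClosed B ∧ ∃ (U : ℝ → Set X) (T : ℝ → ℝ),
    (∀ η ∈ Ioo (0:ℝ) 1, IsClosed (U η) ∧ B ⊆ interior (U η)) ∧
    (∀ η lam, η ∈ Ioo (0:ℝ) 1 → lam ∈ Ioo (0:ℝ) 1 → η < lam → U η ⊆ U lam) ∧
    (∀ η lam, η ∈ Ioo (0:ℝ) 1 → lam ∈ Ioo (0:ℝ) 1 → η < lam →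
      {x | infDist x (U η) < lam - η} ⊆ U lam) ∧
    (B = ⋂ η ∈ Ioo (0:ℝ) 1, omegaSet φ (U η)) ∧
    (∀ η ∈ Ioo (0:ℝ) 1, 0 < T η) ∧
    (∀ K, K ⊆ Ioo (0:ℝ) 1 → IsCompact K → Bornology.IsBounded (T '' K)) ∧
    ∀ η ∈ Ioo (0:ℝ) 1, closure {y | ∃ t, T η ≤ t ∧ ∃ u ∈ U η, φ t u = y} ⊆ U η

/-- A strong `(ε,T)`-chain from `x` to `y`. -/
def StrongChain {X : Type*} [MetricSpace X] (φ : ℝ → X → X) (ε T : ℝ) (x y : X) : Prop :=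
  ∃ (n : ℕ) (xs : ℕ → X) (ts : ℕ → ℝ), xs 0 = x ∧ xs (n + 1) = y ∧
    (∀ i ≤ n, T ≤ ts i) ∧
    ∑ i ∈ Finset.range (n + 1), dist (φ (ts i) (xs i)) (xs (i + 1)) < ε

/-- The strong chain recurrent set. -/
def SCR {X : Type*} [MetricSpace X] (φ : ℝ → X → X) : Set X :=
  {x | ∀ ε > 0, ∀ T > 0, StrongChain φ ε T x x}

/-- `Ω(Y,ε,T)`: points reachable from `Y` by a strong `(ε,T)`-chain. -/
def OmegaChain {X : Type*} [MetricSpace X] (φ : ℝ → X → X) (Y : Set X) (ε T : ℝ) : Set X :=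
  {y | ∃ x ∈ Y, StrongChain φ ε T x y}

/-- `Ω̄(Y,ε,T) = ⋂_{η>0} Ω(Y,ε+η,T)`. -/
def OmegaBar {X : Type*} [MetricSpace X] (φ : ℝ → X → X) (Y : Set X) (ε T : ℝ) : Set X :=
  ⋂ η ∈ Ioi (0:ℝ), OmegaChain φ Y (ε + η) T


/-!
Both `B•` and its complement are unions of orbits, because `ω(φ_s x) = ω(x)`; this gives the
invariance. For disjointness, a point `x ∈ B` lies in arbitrarily small forward invariant
neighbourhoods `W` of `B`, so `ω(x) ⊆ closure W`; by regularity these closures shrink to `B`,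
hence `ω(x) ⊆ B`, and `ω(x)` is nonempty by compactness.
-/

lemma omegaPt_nonempty {X : Type*} [TopologicalSpace X] [CompactSpace X] (φ : ℝ → X → X)
    (x : X) : (omegaPt φ x).Nonempty := by
  apply IsCompact.nonempty_iInter_of_directed_nonempty_isCompact_isClosed
  · intro T T'
    refine ⟨max T T', closure_mono ?_, closure_mono ?_⟩ <;>
      rintro y ⟨t, ht, rfl⟩ <;> exact ⟨t, le_trans (by simp) ht, rfl⟩
  · exact fun T => ⟨φ T x, subset_closure ⟨T, le_rfl, rfl⟩⟩
  · exact fun T => isClosed_closure.isCompact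
  · exact fun T => isClosed_closure

section Flow

variable {X : Type*} [TopologicalSpace X] {φ : ℝ → X → X}

lemma IsFlow.apply_neg_apply (hφ : IsFlow φ) (t : ℝ) (x : X) : φ (-t) (φ t x) = x := by
  rw [← hφ.2.2, neg_add_cancel, hφ.2.1]

lemma IsFlow.image_eq_preimage_neg (hφ : IsFlow φ) (t : ℝ) (S : Set X) :
    φ t '' S = φ (-t) ⁻¹' S := by
  refine congrFun (image_eq_preimage_of_inverse (hφ.apply_neg_apply t) fun x => ?_) S
  simpa using hφ.apply_neg_apply (-t) x

lemma IsFlow.omegaPt_apply (hφ : IsFlow φ) (s : ℝ) (x : X) :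
    omegaPt φ (φ s x) = omegaPt φ x := by
  have tail : ∀ T : ℝ, {y | ∃ t, T ≤ t ∧ φ t (φ s x) = y} = {y | ∃ t, T + s ≤ t ∧ φ t x = y} := by
    intro T
    ext y
    constructor
    · rintro ⟨t, ht, rfl⟩
      exact ⟨t + s, by linarith, hφ.2.2 t s x⟩
    · rintro ⟨t, ht, rfl⟩
      refine ⟨t - s, by linarith, ?_⟩
      rw [← hφ.2.2, sub_add_cancel]
  ext y
  simp only [omegaPt, mem_iInter, tail]
  exact ⟨fun h T => by simpa using h (T - s), fun h T => h (T + s)⟩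

lemma IsFlow.preimage_bulletSet (hφ : IsFlow φ) (t : ℝ) (B : Set X) :
    φ t ⁻¹' bulletSet φ B = bulletSet φ B := by
  ext x
  show omegaPt φ (φ t x) ∩ B = ∅ ↔ omegaPt φ x ∩ B = ∅
  rw [hφ.omegaPt_apply]

lemma IsFlow.image_bulletSet (hφ : IsFlow φ) (t : ℝ) (B : Set X) :
    φ t '' bulletSet φ B = bulletSet φ B := by
  rw [hφ.image_eq_preimage_neg, hφ.preimage_bulletSet]

lemma omegaPt_subset_closure_of_fwdInvariant {W : Set X} (hW : FwdInvariant φ W) {x : X}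
    (hx : x ∈ W) : omegaPt φ x ⊆ closure W :=
  (iInter_subset _ 0).trans <| closure_mono <| by
    rintro y ⟨t, ht, rfl⟩
    exact hW t ht x hx

lemma IsStable.omegaPt_subset [RegularSpace X] {B : Set X} (hB : IsStable φ B) {x : X}
    (hx : x ∈ B) : omegaPt φ x ⊆ B := by
  intro z hz
  by_contra hzB
  have hsep : Disjoint (𝓝ˢ B) (𝓝 z) := disjoint_nhdsSet_nhds.mpr (by rwa [hB.1.closure_eq])
  obtain ⟨N, hN, V, hV, hNV⟩ := Filter.disjoint_iff.mp hsep
  obtain ⟨W, hW, hWinv, hWN⟩ := hB.2 N hN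
  have hzW : z ∈ closure W :=
    omegaPt_subset_closure_of_fwdInvariant hWinv (subset_of_mem_nhdsSet hW hx) hz
  obtain ⟨y, hyV, hyW⟩ := mem_closure_iff_nhds.mp hzW V hV
  exact hNV.ne_of_mem (hWN hyW) hyV rfl

end Flow

theorem stmt2_general {X : Type*} [MetricSpace X] [CompactSpace X] (φ : ℝ → X → X)
    (hφ : IsFlow φ) (B : Set X) (hB : IsStable φ B) :
    (∀ t : ℝ, φ t '' bulletSet φ B = bulletSet φ B) ∧ Disjoint B (bulletSet φ B) := by
  refine ⟨(hφ.image_bulletSet · B), disjoint_left.mpr fun x hxB hxbullet => ?_⟩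
  obtain ⟨z, hz⟩ := omegaPt_nonempty φ x
  have hzB : z ∈ B := hB.omegaPt_subset hxB hz
  exact (eq_empty_iff_forall_notMem.mp hxbullet) z ⟨hz, hzB⟩

theorem stmt2 {X : Type*} [MetricSpace X] [CompactSpace X] (φ : ℝ → X → X)
    (hφ : IsFlow φ) (B : Set X) (hBne : B.Nonempty) (hB : IsStable φ B) :
    (∀ t : ℝ, φ t '' bulletSet φ B = bulletSet φ B) ∧ Disjoint B (bulletSet φ B) :=
  stmt2_general φ hφ B hB
end

section
/- Every strongly stable set B for a continuous flow φ on a compact metric space is forward invariant, i.e., φ_t(B) ⊆ B for all t ≥ 0. -/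
open Set Metric Topology MeasureTheory

theorem IsFlow.continuous_apply {X : Type*} [TopologicalSpace X] {φ : ℝ → X → X}
    (hφ : IsFlow φ) (t : ℝ) : Continuous (φ t) :=
  hφ.1.comp (continuous_id.prodMk continuous_const)

theorem fwdInvariant_biInter {X ι : Type*} {φ : ℝ → X → X} {s : Set ι} {S : ι → Set X}
    (h : ∀ i ∈ s, FwdInvariant φ (S i)) : FwdInvariant φ (⋂ i ∈ s, S i) := by
  intro t ht x hx
  simp only [mem_iInter] at hx ⊢
  exact fun i hi => h i hi t ht x (hx i hi)

theorem IsFlow.fwdInvariant_omegaSet {X : Type*} [TopologicalSpace X] {φ : ℝ → X → X}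
    (hφ : IsFlow φ) (U : Set X) : FwdInvariant φ (omegaSet φ U) := by
  intro t ht y hy
  simp only [omegaSet, mem_iInter] at hy ⊢
  intro T
  have hshift : φ t '' {y | ∃ s, T ≤ s ∧ ∃ u ∈ U, φ s u = y} ⊆
      {y | ∃ s, T ≤ s ∧ ∃ u ∈ U, φ s u = y} := by
    rintro _ ⟨z, ⟨s, hs, u, hu, rfl⟩, rfl⟩
    exact ⟨t + s, by linarith, u, hu, hφ.2.2 t s u⟩
  exact closure_mono hshift
    (image_closure_subset_closure_image (hφ.continuous_apply t) ⟨y, hy T, rfl⟩)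

theorem stmt3_general {X : Type*} [MetricSpace X] (φ : ℝ → X → X)
    (hφ : IsFlow φ) (B : Set X) (hB : StronglyStable φ B) :
    FwdInvariant φ B := by
  obtain ⟨-, U, -, -, -, -, rfl, -⟩ := hB
  exact fwdInvariant_biInter fun η _ => hφ.fwdInvariant_omegaSet (U η)

theorem stmt3 {X : Type*} [MetricSpace X] [CompactSpace X] (φ : ℝ → X → X)
    (hφ : IsFlow φ) (B : Set X) (hB : StronglyStable φ B) :
    FwdInvariant φ B :=
  stmt3_general φ hφ B hB
end

section
/- With the notation of the previous lemma (B strongly stable, B• ≠ ∅, and η₀ chosen so that B*_{η₀} := {x : φ_t(x) ∉ U_{η₀} ∀ t ≥ 0} ≠ ∅), the set B*_{η₀} is forward invariant, B*_{η₀} ⊆ B•, and B ∩ cl(B*_{η₀}) = ∅. -/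
open Set Metric Topology MeasureTheory

/-!
Orbits starting in `B*_{η₀}` stay in the complement of `U_{η₀}`, so `B*_{η₀}` and the ω-limit
sets of its points lie in the closure of that complement, which is the complement of
`interior U_{η₀} ⊇ B`.
-/

section

variable {X : Type*} (φ : ℝ → X → X) (S : Set X)

theorem fwdInvariant_setOf_forall_flow_mem (hadd : ∀ s t x, φ (s + t) x = φ s (φ t x)) :
    FwdInvariant φ {x | ∀ t, 0 ≤ t → φ t x ∈ S} := by
  intro t ht x hx s hs
  rw [← hadd]
  exact hx (s + t) (by linarith)

theorem setOf_forall_flow_mem_subset (h0 : ∀ x, φ 0 x = x) :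
    {x | ∀ t, 0 ≤ t → φ t x ∈ S} ⊆ S := fun x hx => h0 x ▸ hx 0 le_rfl

theorem omegaPt_subset_closure_of_forall_flow_mem [TopologicalSpace X] {x : X}
    (hx : ∀ t, 0 ≤ t → φ t x ∈ S) : omegaPt φ x ⊆ closure S := by
  refine (iInter_subset _ 0).trans (closure_mono ?_)
  rintro _ ⟨t, ht, rfl⟩
  exact hx t ht

end

theorem disjoint_closure_compl_of_subset_interior {X : Type*} [TopologicalSpace X]
    {A V : Set X} (h : A ⊆ interior V) : Disjoint A (closure Vᶜ) := by
  rwa [closure_compl, disjoint_compl_right_iff_subset]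

theorem stmt6_general {X : Type*} [MetricSpace X] (φ : ℝ → X → X)
    (hφ : IsFlow φ) (B : Set X)
    (U : ℝ → Set X)
    (hUcl : ∀ η ∈ Ioo (0:ℝ) 1, IsClosed (U η) ∧ B ⊆ interior (U η))
    (η₀ : ℝ) (hη₀ : η₀ ∈ Ioo (0:ℝ) 1)
    (Bstar : Set X) (hBstar : Bstar = {x : X | ∀ t, 0 ≤ t → φ t x ∉ U η₀}) :
    FwdInvariant φ Bstar ∧ Bstar ⊆ bulletSet φ B ∧ B ∩ closure Bstar = ∅ := by
  obtain ⟨-, hφ0, hφadd⟩ := hφ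
  subst hBstar
  have hB : Disjoint B (closure (U η₀)ᶜ) :=
    disjoint_closure_compl_of_subset_interior (hUcl η₀ hη₀).2
  refine ⟨fwdInvariant_setOf_forall_flow_mem φ (U η₀)ᶜ hφadd, fun x hx => ?_, ?_⟩
  · exact (hB.mono_right (omegaPt_subset_closure_of_forall_flow_mem φ (U η₀)ᶜ hx)).symm.inter_eq
  · exact (hB.mono_right (closure_mono (setOf_forall_flow_mem_subset φ (U η₀)ᶜ hφ0))).inter_eq

theorem stmt6 {X : Type*} [MetricSpace X] [CompactSpace X] (φ : ℝ → X → X)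
    (hφ : IsFlow φ) (B : Set X) (hBcl : IsClosed B)
    (U : ℝ → Set X) (T : ℝ → ℝ)
    (hUcl : ∀ η ∈ Ioo (0:ℝ) 1, IsClosed (U η) ∧ B ⊆ interior (U η))
    (hUnest : ∀ η lam, η ∈ Ioo (0:ℝ) 1 → lam ∈ Ioo (0:ℝ) 1 → η < lam → U η ⊆ U lam)
    (hUi : ∀ η lam, η ∈ Ioo (0:ℝ) 1 → lam ∈ Ioo (0:ℝ) 1 → η < lam →
      {x | infDist x (U η) < lam - η} ⊆ U lam)
    (hUii : B = ⋂ η ∈ Ioo (0:ℝ) 1, omegaSet φ (U η))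
    (hTpos : ∀ η ∈ Ioo (0:ℝ) 1, 0 < T η)
    (hTbdd : ∀ K, K ⊆ Ioo (0:ℝ) 1 → IsCompact K → Bornology.IsBounded (T '' K))
    (hUiii : ∀ η ∈ Ioo (0:ℝ) 1, closure {y | ∃ t, T η ≤ t ∧ ∃ u ∈ U η, φ t u = y} ⊆ U η)
    (hbul : (bulletSet φ B).Nonempty)
    (η₀ : ℝ) (hη₀ : η₀ ∈ Ioo (0:ℝ) 1)
    (Bstar : Set X) (hBstar : Bstar = {x : X | ∀ t, 0 ≤ t → φ t x ∉ U η₀})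
    (hne : Bstar.Nonempty) :
    FwdInvariant φ Bstar ∧ Bstar ⊆ bulletSet φ B ∧ B ∩ closure Bstar = ∅ :=
  stmt6_general φ hφ B U hUcl η₀ hη₀ Bstar hBstar
end

section
/- Let φ be a continuous flow on a compact metric space (X,d), x ∈ X, and ε, T > 0 such that x ∉ Ω̄(x, ε, T). Then there exists a closed ball C̃ centered at x with C̃ ∩ Ω̄(C̃, ε, T) = ∅, where Ω̄(Y,ε,T) := ⋂_{η>0} Ω(Y, ε+η, T) and Ω(Y, δ, T) is the set of points reachable from some point of Y by a strong (δ,T)-chain. -/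
open Set Metric Topology MeasureTheory

/-! If every ball `C` around `x` met `Ω̄(C, ε, T)`, pick a chain of cost `< ε + η/3` from a point
`a ∈ C` to a point `b ∈ C`. Its first step can be taken of length `t ∈ [T, 2T]`, so by uniform
continuity of the flow on `X × [T, 2T]` it restarts from `x` at extra cost `< η/3` once `C` is
small; redirecting its end from `b` to `x` costs `dist b x`, giving an `(ε + η)`-chain from `x`
to `x` for every `η > 0`. -/

namespace StrongChain

variable {X : Type*} [MetricSpace X] {φ : ℝ → X → X} {δ T : ℝ} {x y : X}

lemma mono {δ' : ℝ} (h : StrongChain φ δ T x y) (hδ : δ ≤ δ') : StrongChain φ δ' T x y := by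
  obtain ⟨n, xs, ts, h0, hn, hts, hsum⟩ := h
  exact ⟨n, xs, ts, h0, hn, hts, hsum.trans_le hδ⟩

lemma replace_last {b : X} (h : StrongChain φ δ T x b) (y : X) :
    StrongChain φ (δ + dist b y) T x y := by
  obtain ⟨n, xs, ts, h0, hn, hts, hsum⟩ := h
  refine ⟨n, Function.update xs (n + 1) y, ts, ?_, by simp, hts, ?_⟩
  · rwa [Function.update_of_ne (by omega)]
  have hlast : dist (φ (ts n) (xs n)) y ≤ dist (φ (ts n) (xs n)) (xs (n + 1)) + dist b y :=
    hn ▸ dist_triangle _ _ _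
  rw [Finset.sum_range_succ, Function.update_of_ne (by omega), Function.update_self,
    Finset.sum_congr rfl fun i hi => by
      have hi : i < n := Finset.mem_range.1 hi
      rw [Function.update_of_ne (by omega), Function.update_of_ne (by omega)]]
  rw [Finset.sum_range_succ] at hsum
  linarith

lemma cons {t : ℝ} {b : X} (ht : T ≤ t) (h : StrongChain φ δ T b y) (x : X) :
    StrongChain φ (dist (φ t x) b + δ) T x y := by
  obtain ⟨n, xs, ts, h0, hn, hts, hsum⟩ := h
  refine ⟨n + 1, fun i => Nat.casesOn i x xs, fun i => Nat.casesOn i t ts, rfl, hn, ?_, ?_⟩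
  · rintro (_ | i) hi
    exacts [ht, hts i (by omega)]
  · rw [Finset.sum_range_succ']
    simp only [h0, Nat.rec_zero]
    linarith

lemma exists_replace_head {a : X} (h : StrongChain φ δ T a y) :
    ∃ t ≥ T, ∀ z s, T ≤ s → StrongChain φ (δ + dist (φ s z) (φ t a)) T z y := by
  obtain ⟨n, xs, ts, h0, hn, hts, hsum⟩ := h
  refine ⟨ts 0, hts 0 (Nat.zero_le n), fun z s hs => ?_⟩
  refine ⟨n, Function.update xs 0 z, Function.update ts 0 s, by simp, ?_, ?_, ?_⟩
  · rwa [Function.update_of_ne (by omega)]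
  · rintro (_ | i) hi
    · simpa using hs
    · rw [Function.update_of_ne (by omega)]
      exact hts _ hi
  have hfirst : dist (φ s z) (xs 1) ≤ dist (φ s z) (φ (ts 0) a) + dist (φ (ts 0) (xs 0)) (xs 1) :=
    h0 ▸ dist_triangle _ _ _
  rw [Finset.sum_range_succ'] at hsum ⊢
  simp only [Function.update_self, Function.update_of_ne (Nat.succ_ne_zero _)]
  linarith

lemma exists_restart (hφ : ∀ s t x, φ (s + t) x = φ s (φ t x)) (hT : 0 ≤ T) {a : X}
    (h : StrongChain φ δ T a y) :
    ∃ t ∈ Icc T (2 * T), ∀ z, StrongChain φ (dist (φ t z) (φ t a) + δ) T z y := by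
  obtain ⟨t, ht, hhead⟩ := h.exists_replace_head
  by_cases ht2 : t ≤ 2 * T
  · exact ⟨t, ⟨ht, ht2⟩, fun z => (hhead z t ht).mono (by rw [add_comm])⟩
  · -- split the long first step into steps of length `T` and `t - T`
    refine ⟨T, ⟨le_rfl, by linarith⟩, fun z => ?_⟩
    have htail := hhead (φ T a) (t - T) (by linarith)
    rw [← hφ, sub_add_cancel, dist_self, add_zero] at htail
    exact htail.cons le_rfl z

end StrongChain

lemma exists_dist_flow_lt_of_dist_lt {X : Type*} [MetricSpace X] [CompactSpace X]
    {φ : ℝ → X → X} (hφ : Continuous fun p : X × ℝ => φ p.2 p.1) {K : Set ℝ} (hK : IsCompact K)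
    {ε : ℝ} (hε : 0 < ε) :
    ∃ δ > 0, ∀ a b, dist a b < δ → ∀ t ∈ K, dist (φ t a) (φ t b) < ε := by
  obtain ⟨δ, hδ, hUC⟩ := Metric.uniformContinuousOn_iff.1
    ((isCompact_univ.prod hK).uniformContinuousOn_of_continuous hφ.continuousOn) ε hε
  refine ⟨δ, hδ, fun a b hab t ht => hUC (a, t) ⟨mem_univ _, ht⟩ (b, t) ⟨mem_univ _, ht⟩ ?_⟩
  simpa [Prod.dist_eq] using hab

theorem stmt12_general {X : Type*} [MetricSpace X] [CompactSpace X] (φ : ℝ → X → X)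
    (hφ : IsFlow φ) (x : X) (ε T : ℝ) (hT : 0 < T)
    (hx : x ∉ OmegaBar φ {x} ε T) :
    ∃ r > 0, closedBall x r ∩ OmegaBar φ (closedBall x r) ε T = ∅ := by
  simp only [OmegaBar, mem_iInter₂, mem_Ioi, not_forall] at hx
  obtain ⟨η, hη, hxη⟩ := hx
  obtain ⟨δ, hδ, hflow⟩ := exists_dist_flow_lt_of_dist_lt hφ.1 (isCompact_Icc (a := T) (b := 2 * T))
    (by positivity : 0 < η / 3)
  refine ⟨min (δ / 2) (η / 3), by positivity, eq_empty_of_forall_notMem fun b ⟨hbx, hb⟩ => ?_⟩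
  simp only [OmegaBar, mem_iInter₂, mem_Ioi] at hb
  obtain ⟨a, ha, hab⟩ := hb (η / 3) (by positivity)
  obtain ⟨t, ht, hrestart⟩ := hab.exists_restart hφ.2.2 hT.le
  have hxa : dist (φ t x) (φ t a) < η / 3 :=
    hflow x a (by linarith [mem_closedBall'.1 ha, min_le_left (δ / 2) (η / 3)]) t ht
  have hbx' : dist b x ≤ η / 3 := (mem_closedBall.1 hbx).trans (min_le_right _ _)
  exact hxη ⟨x, rfl, ((hrestart x).replace_last x).mono (by linarith)⟩

theorem stmt12 {X : Type*} [MetricSpace X] [CompactSpace X] (φ : ℝ → X → X)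
    (hφ : IsFlow φ) (x : X) (ε T : ℝ) (hε : 0 < ε) (hT : 0 < T)
    (hx : x ∉ OmegaBar φ {x} ε T) :
    ∃ r > 0, closedBall x r ∩ OmegaBar φ (closedBall x r) ε T = ∅ :=
  stmt12_general φ hφ x ε T hT hx
end

section
/- Let φ be a continuous flow on a compact metric space X, and let (h_n)_{n≥0} be continuous Lyapunov functions for φ with values in [0,1]. Then h(x) := Σ_{n=0}^∞ h_n(x)/3ⁿ defines a continuous Lyapunov function for φ; moreover, if x ∈ X, t > 0, and h_m(φ_t(x)) < h_m(x) for some m, then h(φ_t(x)) < h(x). -/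
open Set Metric Topology MeasureTheory

section WeightedSum

variable {ι X : Type*} {w : ι → ℝ} {g : ι → X → ℝ}

theorem summable_mul_of_mem_Icc (hw0 : ∀ i, 0 ≤ w i) (hw : Summable w)
    (hg : ∀ i x, g i x ∈ Icc (0 : ℝ) 1) (x : X) : Summable fun i => g i x * w i :=
  hw.of_nonneg_of_le (fun i => mul_nonneg (hg i x).1 (hw0 i))
    fun i => mul_le_of_le_one_left (hw0 i) (hg i x).2

theorem continuous_tsum_mul_of_mem_Icc [TopologicalSpace X] (hw0 : ∀ i, 0 ≤ w i)
    (hw : Summable w) (hg : ∀ i x, g i x ∈ Icc (0 : ℝ) 1) (hcont : ∀ i, Continuous (g i)) :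
    Continuous fun x => ∑' i, g i x * w i :=
  continuous_tsum (fun i => (hcont i).mul continuous_const) hw fun i x => by
    rw [Real.norm_eq_abs, abs_of_nonneg (mul_nonneg (hg i x).1 (hw0 i))]
    exact mul_le_of_le_one_left (hw0 i) (hg i x).2

theorem tsum_mul_le_tsum_mul_of_mem_Icc (hw0 : ∀ i, 0 ≤ w i) (hw : Summable w)
    (hg : ∀ i x, g i x ∈ Icc (0 : ℝ) 1) {x y : X} (hle : ∀ i, g i y ≤ g i x) :
    ∑' i, g i y * w i ≤ ∑' i, g i x * w i :=
  Summable.tsum_le_tsum (fun i => mul_le_mul_of_nonneg_right (hle i) (hw0 i))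
    (summable_mul_of_mem_Icc hw0 hw hg y) (summable_mul_of_mem_Icc hw0 hw hg x)

theorem tsum_mul_lt_tsum_mul_of_mem_Icc (hw0 : ∀ i, 0 ≤ w i) (hw : Summable w)
    (hg : ∀ i x, g i x ∈ Icc (0 : ℝ) 1) {x y : X} (hle : ∀ i, g i y ≤ g i x) {m : ι}
    (hwm : 0 < w m) (hlt : g m y < g m x) :
    ∑' i, g i y * w i < ∑' i, g i x * w i :=
  Summable.tsum_lt_tsum (fun i => mul_le_mul_of_nonneg_right (hle i) (hw0 i))
    (mul_lt_mul_of_pos_right hlt hwm)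
    (summable_mul_of_mem_Icc hw0 hw hg y) (summable_mul_of_mem_Icc hw0 hw hg x)

end WeightedSum

theorem stmt15_general {X : Type*} [MetricSpace X] (φ : ℝ → X → X)
    (hs : ℕ → X → ℝ)
    (hcont : ∀ n, Continuous (hs n)) (h01 : ∀ n x, hs n x ∈ Icc (0:ℝ) 1)
    (hLyap : ∀ n, ∀ t, 0 ≤ t → ∀ x, hs n (φ t x) ≤ hs n x)
    (h : X → ℝ) (hh : ∀ x, h x = ∑' n : ℕ, hs n x / 3 ^ n) :
    Continuous h ∧ (∀ t, 0 ≤ t → ∀ x, h (φ t x) ≤ h x) ∧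
      ∀ x, ∀ t, 0 < t → (∃ m, hs m (φ t x) < hs m x) → h (φ t x) < h x := by
  have hw0 : ∀ n : ℕ, 0 ≤ (3⁻¹ : ℝ) ^ n := fun n => by positivity
  have hw : Summable fun n : ℕ => (3⁻¹ : ℝ) ^ n :=
    summable_geometric_of_lt_one (by norm_num) (by norm_num)
  obtain rfl : h = fun x => ∑' n, hs n x * (3⁻¹ : ℝ) ^ n := by
    ext x
    simp only [hh, div_eq_mul_inv, inv_pow]
  refine ⟨continuous_tsum_mul_of_mem_Icc hw0 hw h01 hcont,
    fun t ht x => tsum_mul_le_tsum_mul_of_mem_Icc hw0 hw h01 fun n => hLyap n t ht x, ?_⟩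
  rintro x t ht ⟨m, hm⟩
  exact tsum_mul_lt_tsum_mul_of_mem_Icc hw0 hw h01 (fun n => hLyap n t ht.le x)
    (by positivity) hm

theorem stmt15 {X : Type*} [MetricSpace X] [CompactSpace X] (φ : ℝ → X → X)
    (hφ : IsFlow φ) (hs : ℕ → X → ℝ)
    (hcont : ∀ n, Continuous (hs n)) (h01 : ∀ n x, hs n x ∈ Icc (0:ℝ) 1)
    (hLyap : ∀ n, ∀ t, 0 ≤ t → ∀ x, hs n (φ t x) ≤ hs n x)
    (h : X → ℝ) (hh : ∀ x, h x = ∑' n : ℕ, hs n x / 3 ^ n) :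
    Continuous h ∧ (∀ t, 0 ≤ t → ∀ x, h (φ t x) ≤ h x) ∧
      ∀ x, ∀ t, 0 < t → (∃ m, hs m (φ t x) < hs m x) → h (φ t x) < h x :=
  stmt15_general φ hs hcont h01 hLyap h hh
end

section
/- Let φ : X × ℝ → X be a continuous flow on a compact metric space (X,d). Then there exists a continuous Lyapunov function h : X → ℝ for φ which is strictly decreasing outside SCR_d(φ): for every x ∉ SCR_d(φ) and every t > 0, h(φ_t(x)) < h(x). -/
open Set Metric Topology MeasureTheory

/-!
Fix a base point `x₀` and a time `T`. The cheapest strong `T`-chain from `x₀` to `z` defines a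
cost `c(z)`, which is `1`-Lipschitz and does not increase along flow times `≥ T`; the supremum of
`min (c ∘ φ_r) 1` over the window `r ∈ [0, T]` is then a continuous Lyapunov function. If `x` is
not strongly chain recurrent, some `(ε, T)`-chains from `x` to itself cost at least `ε`, and for
`x₀` close to `φ_T x` this Lyapunov function is large at `x` but small at `φ_{3T} x`. Composing
with `φ_q`, `q ∈ ℚ`, turns such a drop into a drop along every orbit segment `[x, φ_t x]`, because a
non-increasing continuous function of time that is `t`-periodic is constant. Finally a weighted sum
over `x₀` in a countable dense set, `T ∈ ℕ` and `q ∈ ℚ` is strictly decreasing off `SCR φ`.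
-/

open Set Metric

section

variable {X : Type*}

theorem exists_continuous_monotone_combination [TopologicalSpace X] {ι : Type*} [Countable ι]
    (f : ι → X → ℝ) (hf : ∀ i, Continuous (f i)) (hbound : ∀ i x, |f i x| ≤ 1) :
    ∃ h : X → ℝ, Continuous h ∧ ∀ a b, (∀ i, f i a ≤ f i b) →
      h a ≤ h b ∧ ((∃ i, f i a < f i b) → h a < h b) := by
  obtain ⟨e, he⟩ := exists_injective_nat ι
  set w : ι → ℝ := fun i => (1 / 2 : ℝ) ^ e i
  have hw_pos : ∀ i, 0 < w i := fun i => by positivity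
  have hw : Summable w := summable_geometric_two.comp_injective he
  have hnorm : ∀ i x, ‖w i * f i x‖ ≤ w i := fun i x => by
    rw [norm_mul, Real.norm_of_nonneg (hw_pos i).le, Real.norm_eq_abs]
    exact mul_le_of_le_one_right (hw_pos i).le (hbound i x)
  have hsum : ∀ x, Summable fun i => w i * f i x := fun x => hw.of_norm_bounded (hnorm · x)
  refine ⟨fun x => ∑' i, w i * f i x,
    continuous_tsum (fun i => continuous_const.mul (hf i)) hw hnorm, fun a b hab => ⟨?_, ?_⟩⟩
  · exact (hsum a).tsum_le_tsum (fun i => mul_le_mul_of_nonneg_left (hab i) (hw_pos i).le)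
      (hsum b)
  · rintro ⟨i, hi⟩
    exact (hsum a).tsum_lt_tsum (fun i => mul_le_mul_of_nonneg_left (hab i) (hw_pos i).le)
      (mul_lt_mul_of_pos_left hi (hw_pos i)) (hsum b)

def IsLyapunov (φ : ℝ → X → X) (h : X → ℝ) : Prop :=
  ∀ t, 0 ≤ t → ∀ x, h (φ t x) ≤ h x

namespace IsFlow

variable [TopologicalSpace X] {φ : ℝ → X → X}

theorem continuous_apply_s16 (hφ : IsFlow φ) (t : ℝ) : Continuous (φ t) :=
  hφ.1.comp (continuous_id.prodMk continuous_const)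

theorem continuous_orbit (hφ : IsFlow φ) (x : X) : Continuous fun t => φ t x :=
  hφ.1.comp (continuous_const.prodMk continuous_id)

theorem map_zero (hφ : IsFlow φ) (x : X) : φ 0 x = x := hφ.2.1 x

theorem map_map (hφ : IsFlow φ) (s t : ℝ) (x : X) : φ s (φ t x) = φ (s + t) x :=
  (hφ.2.2 s t x).symm

end IsFlow

theorem IsLyapunov.comp_flow [TopologicalSpace X] {φ : ℝ → X → X} {h : X → ℝ}
    (hφ : IsFlow φ) (hh : IsLyapunov φ h) (s : ℝ) : IsLyapunov φ (h ∘ φ s) := by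
  intro t ht x
  simpa only [Function.comp_apply, hφ.map_map, add_comm s t] using hh t ht (φ s x)

/-- A non-increasing continuous function of time that is `t`-periodic is constant. -/
theorem IsLyapunov.exists_rat_lt [TopologicalSpace X] {φ : ℝ → X → X} {v : X → ℝ}
    (hv : IsLyapunov φ v) (hφ : IsFlow φ) (hv_cont : Continuous v) {y : X} {s : ℝ}
    (hdrop : v (φ s y) < v y) {t : ℝ} (ht : 0 < t) :
    ∃ q : ℚ, v (φ (q + t) y) < v (φ q y) := by
  by_contra! hq
  set g : ℝ → ℝ := fun r => v (φ r y)
  have g_cont : Continuous g := hv_cont.comp (hφ.continuous_orbit y)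
  have g_anti : ∀ a b, a ≤ b → g b ≤ g a := fun a b hab => by
    simpa only [g, hφ.map_map, sub_add_cancel] using hv (b - a) (sub_nonneg.2 hab) (φ a y)
  have g_periodic : (fun r => g (r + t)) = g :=
    Rat.denseRange_cast.equalizer (g_cont.comp (continuous_add_const t)) g_cont
      (funext fun q => le_antisymm (g_anti _ _ (le_add_of_nonneg_right ht.le)) (hq q))
  have g_nat_mul : ∀ n : ℕ, g (n * t) = g 0 := fun n => by
    induction n with
    | zero => simp
    | succ n ih => rw [Nat.cast_succ, add_one_mul, congrFun g_periodic, ih]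
  obtain ⟨n, hn⟩ := exists_nat_ge (s / t)
  have hsn : s ≤ n * t := by rwa [div_le_iff₀ ht] at hn
  have hg0 : g 0 = v y := congrArg v (hφ.map_zero y)
  linarith [g_anti _ _ hsn, g_nat_mul n]

section WindowSup

variable {φ : ℝ → X → X} {u : X → ℝ} {T : ℝ}

noncomputable def windowSup (φ : ℝ → X → X) (u : X → ℝ) (T : ℝ) (z : X) : ℝ :=
  sSup ((fun r => u (φ r z)) '' Icc 0 T)

theorem windowSup_le (hT : 0 ≤ T) {z : X} {a : ℝ} (H : ∀ r ∈ Icc 0 T, u (φ r z) ≤ a) :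
    windowSup φ u T z ≤ a :=
  csSup_le ((nonempty_Icc.2 hT).image _) (forall_mem_image.2 H)

variable [TopologicalSpace X]

theorem continuous_windowSup (hφ : IsFlow φ) (hu : Continuous u) :
    Continuous (windowSup φ u T) :=
  isCompact_Icc.continuous_sSup (f := fun z r => u (φ r z)) (hu.comp hφ.1)

theorem apply_flow_le_windowSup (hφ : IsFlow φ) (hu : Continuous u) {r : ℝ} (hr : r ∈ Icc 0 T)
    (z : X) : u (φ r z) ≤ windowSup φ u T z :=
  le_csSup (isCompact_Icc.image (hu.comp (hφ.continuous_orbit z))).bddAbove ⟨r, hr, rfl⟩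

theorem le_windowSup (hφ : IsFlow φ) (hu : Continuous u) (hT : 0 ≤ T) (z : X) :
    u z ≤ windowSup φ u T z := by
  simpa only [hφ.map_zero] using apply_flow_le_windowSup hφ hu ⟨le_rfl, hT⟩ z

/-- A time `r + t` beyond the window is compared with time `0`. -/
theorem isLyapunov_windowSup (hφ : IsFlow φ) (hu : Continuous u) (hT : 0 ≤ T)
    (hu_flow : ∀ t, T ≤ t → ∀ z, u (φ t z) ≤ u z) : IsLyapunov φ (windowSup φ u T) := by
  intro t ht z
  refine windowSup_le hT fun r hr => ?_
  rw [hφ.map_map]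
  rcases le_or_gt (r + t) T with hrt | hrt
  · exact apply_flow_le_windowSup hφ hu ⟨add_nonneg hr.1 ht, hrt⟩ z
  · exact (hu_flow _ hrt.le z).trans (le_windowSup hφ hu hT z)

end WindowSup

section ChainCost

variable [MetricSpace X] {φ : ℝ → X → X} {T : ℝ} {x y z : X}

def chainCostSet (φ : ℝ → X → X) (T : ℝ) (x y : X) : Set ℝ :=
  {c | ∃ (n : ℕ) (xs : ℕ → X) (ts : ℕ → ℝ), xs 0 = x ∧ xs (n + 1) = y ∧
    (∀ i ≤ n, T ≤ ts i) ∧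
    ∑ i ∈ Finset.range (n + 1), dist (φ (ts i) (xs i)) (xs (i + 1)) = c}

noncomputable def chainCost (φ : ℝ → X → X) (T : ℝ) (x y : X) : ℝ :=
  sInf (chainCostSet φ T x y)

theorem nonneg_of_mem_chainCostSet {c : ℝ} (hc : c ∈ chainCostSet φ T x y) : 0 ≤ c := by
  obtain ⟨n, xs, ts, -, -, -, rfl⟩ := hc
  exact Finset.sum_nonneg fun i _ => dist_nonneg

theorem dist_mem_chainCostSet {t : ℝ} (ht : T ≤ t) (x z : X) :
    dist (φ t x) z ∈ chainCostSet φ T x z :=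
  ⟨0, fun i => if i = 0 then x else z, fun _ => t, rfl, rfl, fun _ _ => ht, by simp⟩

theorem chainCostSet_nonempty (x y : X) : (chainCostSet φ T x y).Nonempty :=
  ⟨_, dist_mem_chainCostSet le_rfl x y⟩

theorem chainCost_le_of_mem {c : ℝ} (hc : c ∈ chainCostSet φ T x y) : chainCost φ T x y ≤ c :=
  csInf_le ⟨0, fun _ => nonneg_of_mem_chainCostSet⟩ hc

theorem le_chainCost {a : ℝ} (h : ∀ c ∈ chainCostSet φ T x y, a ≤ c) : a ≤ chainCost φ T x y :=
  le_csInf (chainCostSet_nonempty x y) h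

theorem chainCost_nonneg : 0 ≤ chainCost φ T x y :=
  le_chainCost fun _ => nonneg_of_mem_chainCostSet

theorem chainCost_le_dist {t : ℝ} (ht : T ≤ t) (x z : X) : chainCost φ T x z ≤ dist (φ t x) z :=
  chainCost_le_of_mem (dist_mem_chainCostSet ht x z)

theorem le_chainCost_of_not_strongChain {ε : ℝ} (h : ¬ StrongChain φ ε T x x) :
    ε ≤ chainCost φ T x x :=
  le_chainCost fun _ ⟨n, xs, ts, h0, h1, hts, hsum⟩ =>
    not_lt.1 fun hlt => h ⟨n, xs, ts, h0, h1, hts, hsum ▸ hlt⟩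

/-- Moving the endpoint of a chain by `d(y, z)` changes only its last jump. -/
theorem chainCost_le_add_dist (x y z : X) :
    chainCost φ T x z ≤ chainCost φ T x y + dist y z := by
  rw [← sub_le_iff_le_add]
  refine le_chainCost fun c ⟨n, xs, ts, h0, h1, hts, hsum⟩ => sub_le_iff_le_add.2 ?_
  set xs' := Function.update xs (n + 1) z
  have hxs' : ∀ i ≤ n, xs' i = xs i := fun i hi => Function.update_of_ne (by omega) _ _
  have hlast : xs' (n + 1) = z := Function.update_self ..
  have hmem : ∑ i ∈ Finset.range n, dist (φ (ts i) (xs i)) (xs (i + 1)) +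
      dist (φ (ts n) (xs n)) z ∈ chainCostSet φ T x z := by
    refine ⟨n, xs', ts, (hxs' 0 n.zero_le).trans h0, hlast, hts, ?_⟩
    rw [Finset.sum_range_succ, hxs' n le_rfl, hlast]
    congr 1
    refine Finset.sum_congr rfl fun i hi => ?_
    have hi := Finset.mem_range.1 hi
    rw [hxs' i hi.le, hxs' (i + 1) hi]
  rw [Finset.sum_range_succ, h1] at hsum
  linarith [chainCost_le_of_mem hmem, dist_triangle (φ (ts n) (xs n)) y z]

theorem add_mem_chainCostSet {a b : ℝ} (ha : a ∈ chainCostSet φ T x y)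
    (hb : b ∈ chainCostSet φ T y z) : a + b ∈ chainCostSet φ T x z := by
  obtain ⟨n₁, xs₁, ts₁, h₁0, h₁1, h₁t, rfl⟩ := ha
  obtain ⟨n₂, xs₂, ts₂, h₂0, h₂1, h₂t, rfl⟩ := hb
  set xs : ℕ → X := fun i => if i ≤ n₁ then xs₁ i else xs₂ (i - (n₁ + 1))
  set ts : ℕ → ℝ := fun i => if i ≤ n₁ then ts₁ i else ts₂ (i - (n₁ + 1))
  have xs_left : ∀ i ≤ n₁ + 1, xs i = xs₁ i := fun i hi => by
    rcases (Nat.le_succ_iff.1 hi) with hi | rfl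
    · exact if_pos hi
    · simp [xs, h₂0, h₁1]
  have xs_right : ∀ j, xs (n₁ + 1 + j) = xs₂ j := fun j => by
    simp only [xs, if_neg (show ¬ n₁ + 1 + j ≤ n₁ by omega), Nat.add_sub_cancel_left]
  have ts_left : ∀ i ≤ n₁, ts i = ts₁ i := fun i hi => if_pos hi
  have ts_right : ∀ j, ts (n₁ + 1 + j) = ts₂ j := fun j => by
    simp only [ts, if_neg (show ¬ n₁ + 1 + j ≤ n₁ by omega), Nat.add_sub_cancel_left]
  refine ⟨n₁ + 1 + n₂, xs, ts, (xs_left 0 (Nat.zero_le _)).trans h₁0,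
    (xs_right (n₂ + 1)).trans h₂1, fun i hi => ?_, ?_⟩
  · rcases le_or_gt i n₁ with hi₁ | hi₁
    · exact ts_left i hi₁ ▸ h₁t i hi₁
    · obtain ⟨j, rfl⟩ := Nat.exists_eq_add_of_le hi₁
      exact ts_right j ▸ h₂t j (by omega)
  · rw [show n₁ + 1 + n₂ + 1 = n₁ + 1 + (n₂ + 1) by omega, Finset.sum_range_add]
    congr 1 <;> refine Finset.sum_congr rfl fun i hi => ?_
    · have hi := Finset.mem_range.1 hi
      rw [ts_left i (by omega), xs_left i hi.le, xs_left (i + 1) hi]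
    · rw [ts_right, xs_right]
      exact congrArg _ (xs_right (i + 1))

theorem chainCost_triangle (x y z : X) :
    chainCost φ T x z ≤ chainCost φ T x y + chainCost φ T y z := by
  rw [← sub_le_iff_le_add]
  refine le_chainCost fun a ha => sub_le_iff_le_add.2 ?_
  rw [← sub_le_iff_le_add']
  refine le_chainCost fun b hb => sub_le_iff_le_add'.2 ?_
  exact chainCost_le_of_mem (add_mem_chainCostSet ha hb)

theorem chainCost_flow_le {t : ℝ} (ht : T ≤ t) (x₀ z : X) :
    chainCost φ T x₀ (φ t z) ≤ chainCost φ T x₀ z := by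
  have hz : chainCost φ T z (φ t z) ≤ 0 := by
    simpa using chainCost_le_dist (φ := φ) ht z (φ t z)
  linarith [chainCost_triangle (φ := φ) (T := T) x₀ z (φ t z)]

theorem exists_le_chainCost_of_notMem_SCR (hx : x ∉ SCR φ) :
    ∃ ε > 0, ∃ k : ℕ, ε ≤ chainCost φ k x x := by
  have hx' : ¬ ∀ ε > 0, ∀ T > 0, StrongChain φ ε T x x := hx
  push Not at hx'
  obtain ⟨ε, hε, T, -, hchain⟩ := hx'
  obtain ⟨k, hk⟩ := exists_nat_ge T
  refine ⟨ε, hε, k, le_chainCost_of_not_strongChain fun ⟨n, xs, ts, h0, h1, hts, hsum⟩ => ?_⟩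
  exact hchain ⟨n, xs, ts, h0, h1, fun i hi => hk.trans (hts i hi), hsum⟩

end ChainCost

section ChainLyapunov

variable [MetricSpace X] {φ : ℝ → X → X} {T : ℝ}

noncomputable def truncChainCost (φ : ℝ → X → X) (T : ℝ) (x₀ z : X) : ℝ :=
  min (chainCost φ T x₀ z) 1

noncomputable def chainLyapunov (φ : ℝ → X → X) (T : ℝ) (x₀ : X) : X → ℝ :=
  windowSup φ (truncChainCost φ T x₀) T

theorem continuous_truncChainCost (x₀ : X) : Continuous (truncChainCost φ T x₀) :=
  (LipschitzWith.of_le_add fun z z' => by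
    simpa only [dist_comm] using chainCost_le_add_dist (φ := φ) (T := T) x₀ z' z).continuous.min
    continuous_const

theorem continuous_chainLyapunov (hφ : IsFlow φ) (x₀ : X) : Continuous (chainLyapunov φ T x₀) :=
  continuous_windowSup hφ (continuous_truncChainCost x₀)

theorem isLyapunov_chainLyapunov (hφ : IsFlow φ) (hT : 0 ≤ T) (x₀ : X) :
    IsLyapunov φ (chainLyapunov φ T x₀) :=
  isLyapunov_windowSup hφ (continuous_truncChainCost x₀) hT fun _ ht z =>
    min_le_min_right _ (chainCost_flow_le ht x₀ z)

theorem abs_chainLyapunov_le_one (hφ : IsFlow φ) (hT : 0 ≤ T) (x₀ z : X) :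
    |chainLyapunov φ T x₀ z| ≤ 1 := by
  have h0 : 0 ≤ truncChainCost φ T x₀ z := le_min chainCost_nonneg zero_le_one
  refine abs_le.2 ⟨?_, windowSup_le hT fun _ _ => min_le_right _ _⟩
  exact (neg_nonpos.2 zero_le_one).trans
    (h0.trans (le_windowSup hφ (continuous_truncChainCost x₀) hT z))

/-- For `x₀` close to `φ_T x`, reaching `x₀` from `x` is cheap, so returning from `x₀` to `x`
costs almost as much as a loop at `x`; meanwhile `φ_T x₀` is close to `φ_{2T} x`. -/
theorem exists_chainLyapunov_lt (hφ : IsFlow φ) {S : Set X} (hS : Dense S) (hT : 0 ≤ T)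
    {ε : ℝ} (hε : 0 < ε) {x : X} (hx : ε ≤ chainCost φ T x x) :
    ∃ x₀ ∈ S, chainLyapunov φ T x₀ (φ (3 * T) x) < chainLyapunov φ T x₀ x := by
  obtain ⟨δ, hδ, hδε, hδ1⟩ : ∃ δ > 0, δ ≤ ε / 2 ∧ δ ≤ 1 := ⟨min ε 1 / 2, by positivity,
    by linarith [min_le_left ε 1], by linarith [min_le_right ε 1]⟩
  obtain ⟨ρ, hρ, hcont⟩ :=
    Metric.continuousAt_iff.1 ((hφ.continuous_apply_s16 T).continuousAt (x := φ T x)) δ hδ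
  obtain ⟨x₀, hx₀S, hx₀⟩ := hS.exists_dist_lt (φ T x) (lt_min hρ hδ)
  refine ⟨x₀, hx₀S, ?_⟩
  have hu := continuous_truncChainCost (φ := φ) (T := T) x₀
  have to_x₀ : chainCost φ T x x₀ < δ :=
    (chainCost_le_dist le_rfl x x₀).trans_lt (hx₀.trans_le (min_le_right _ _))
  have from_x₀ : chainCost φ T x₀ (φ (2 * T) x) < δ := by
    refine (chainCost_le_dist le_rfl x₀ _).trans_lt ?_
    rw [two_mul, ← hφ.map_map]
    exact hcont (by rw [dist_comm]; exact hx₀.trans_le (min_le_left _ _))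
  have upper : chainLyapunov φ T x₀ (φ (3 * T) x) < δ := by
    refine lt_of_le_of_lt (windowSup_le hT fun r hr => ?_)
      ((min_le_left _ (1 : ℝ)).trans_lt from_x₀)
    rw [hφ.map_map, show r + 3 * T = r + T + 2 * T by ring, ← hφ.map_map]
    exact min_le_min_right _ (chainCost_flow_le (by linarith [hr.1]) x₀ _)
  have lower : δ ≤ chainLyapunov φ T x₀ x := by
    refine le_trans (le_min ?_ ?_) (le_windowSup hφ hu hT x)
    · linarith [chainCost_triangle (φ := φ) (T := T) x x₀ x]
    · exact hδ1
  exact upper.trans_le lower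

end ChainLyapunov

end

theorem stmt16 {X : Type*} [MetricSpace X] [CompactSpace X] (φ : ℝ → X → X)
    (hφ : IsFlow φ) :
    ∃ h : X → ℝ, Continuous h ∧ (∀ t, 0 ≤ t → ∀ x, h (φ t x) ≤ h x) ∧
      ∀ x ∉ SCR φ, ∀ t, 0 < t → h (φ t x) < h x := by
  obtain ⟨S, hS_countable, hS_dense⟩ := TopologicalSpace.exists_countable_dense X
  have : Countable S := hS_countable.to_subtype
  let f : S × ℕ × ℚ → X → ℝ := fun i => chainLyapunov φ i.2.1 i.1 ∘ φ i.2.2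
  have f_lyapunov : ∀ i, IsLyapunov φ (f i) := fun i =>
    (isLyapunov_chainLyapunov hφ i.2.1.cast_nonneg _).comp_flow hφ _
  obtain ⟨h, h_cont, h_mono⟩ := exists_continuous_monotone_combination f
    (fun i => (continuous_chainLyapunov hφ _).comp (hφ.continuous_apply_s16 _))
    (fun i z => abs_chainLyapunov_le_one hφ i.2.1.cast_nonneg _ _)
  refine ⟨h, h_cont, fun t ht x => (h_mono _ _ fun i => f_lyapunov i t ht x).1,
    fun x hx t ht => (h_mono _ _ fun i => f_lyapunov i t ht.le x).2 ?_⟩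
  obtain ⟨ε, hε, k, hk⟩ := exists_le_chainCost_of_notMem_SCR hx
  obtain ⟨x₀, hx₀, hdrop⟩ := exists_chainLyapunov_lt hφ hS_dense k.cast_nonneg hε hk
  obtain ⟨q, hq⟩ := (isLyapunov_chainLyapunov hφ k.cast_nonneg x₀).exists_rat_lt hφ
    (continuous_chainLyapunov hφ x₀) hdrop ht
  exact ⟨(⟨x₀, hx₀⟩, k, q), by simpa only [f, Function.comp_apply, hφ.map_map] using hq⟩
end

section
/- Let φ be a continuous flow on a compact metric space X, B a closed forward-invariant set with closed nested neighborhoods (U_η)_{η∈(0,1)} satisfying condition (i) of strong stability ({x : d(x,U_η) < λ−η} ⊆ U_λ for η < λ), and fix η₀ ∈ (0,1). Define l : X → [0,1] by l(x) = η/η₀ if η = inf{λ ∈ (0,η₀) : x ∈ U_λ} exists (i.e., x ∈ U_λ for some λ < η₀), and l(x) = 1 otherwise. Then l is continuous, l = 0 on B, and l = 1 outside ⋃_{λ<η₀} U_λ. -/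
open Set Metric Topology MeasureTheory

open Classical in
theorem stmt17 {X : Type*} [MetricSpace X] [CompactSpace X] (φ : ℝ → X → X)
    (hφ : IsFlow φ) (B : Set X) (hBcl : IsClosed B) (hBinv : FwdInvariant φ B)
    (U : ℝ → Set X)
    (hUcl : ∀ η ∈ Ioo (0:ℝ) 1, IsClosed (U η) ∧ B ⊆ interior (U η))
    (hUnest : ∀ η lam, η ∈ Ioo (0:ℝ) 1 → lam ∈ Ioo (0:ℝ) 1 → η < lam → U η ⊆ U lam)
    (hUi : ∀ η lam, η ∈ Ioo (0:ℝ) 1 → lam ∈ Ioo (0:ℝ) 1 → η < lam →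
      {x | infDist x (U η) < lam - η} ⊆ U lam)
    (hBU : ∀ η ∈ Ioo (0:ℝ) 1, B ⊆ U η)
    (η₀ : ℝ) (hη₀ : η₀ ∈ Ioo (0:ℝ) 1)
    (l : X → ℝ)
    (hl : ∀ x, l x = if ∃ lam ∈ Ioo (0:ℝ) η₀, x ∈ U lam
      then sInf {lam | lam ∈ Ioo (0:ℝ) η₀ ∧ x ∈ U lam} / η₀ else 1) :
    Continuous l ∧ (∀ x ∈ B, l x = 0) ∧ (∀ x, l x ∈ Icc (0:ℝ) 1) ∧
      ∀ x, x ∉ ⋃ lam ∈ Ioo (0:ℝ) η₀, U lam → l x = 1 := by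
  classical
  obtain ⟨hη₀0, hη₀1⟩ := hη₀
  set S : X → Set ℝ := fun x => {lam | lam ∈ Ioo (0:ℝ) η₀ ∧ x ∈ U lam} with hS
  set m : X → ℝ := fun x => if h : (S x).Nonempty then sInf (S x) else η₀ with hm
  have hbdd : ∀ x, BddBelow (S x) := fun x => ⟨0, fun lam hlam => le_of_lt hlam.1.1⟩
  have hle : ∀ x lam, lam ∈ S x → m x ≤ lam := by
    intro x lam hlam
    simp only [hm]
    rw [dif_pos ⟨lam, hlam⟩]
    exact csInf_le (hbdd x) hlam
  have hm_le : ∀ x, m x ≤ η₀ := by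
    intro x
    by_cases h : (S x).Nonempty
    · obtain ⟨lam, hlam⟩ := h
      exact le_trans (hle x lam hlam) hlam.1.2.le
    · simp only [hm]; rw [dif_neg h]
  have hm_nonneg : ∀ x, 0 ≤ m x := by
    intro x
    by_cases h : (S x).Nonempty
    · simp only [hm]; rw [dif_pos h]
      exact le_csInf h fun lam hlam => hlam.1.1.le
    · simp only [hm]; rw [dif_neg h]; exact hη₀0.le
  have key : ∀ x y, m y ≤ m x + dist x y := by
    intro x y
    refine le_of_forall_pos_le_add fun ε hε => ?_
    by_cases h : (S x).Nonempty
    · obtain ⟨lam, hlamS, hlamlt⟩ := Real.lt_sInf_add_pos h (half_pos hε)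
      have hmx : m x = sInf (S x) := by simp only [hm]; rw [dif_pos h]
      by_cases h2 : lam + dist x y + ε / 2 < η₀
      · set μ := lam + dist x y + ε / 2 with hμ
        have hd : (0:ℝ) ≤ dist x y := dist_nonneg
        have hlamμ : lam < μ := by simp only [hμ]; linarith [half_pos hε]
        have hμmem : μ ∈ Ioo (0:ℝ) 1 := ⟨lt_trans hlamS.1.1 hlamμ, lt_trans h2 hη₀1⟩
        have hlmem : lam ∈ Ioo (0:ℝ) 1 := ⟨hlamS.1.1, lt_trans hlamS.1.2 hη₀1⟩
        have hyU : y ∈ U μ := by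
          apply hUi lam μ hlmem hμmem hlamμ
          have h1 : infDist y (U lam) ≤ dist y x := infDist_le_dist_of_mem hlamS.2
          have h3 : dist y x = dist x y := dist_comm y x
          simp only [mem_setOf_eq, hμ]
          linarith [half_pos hε]
        have hμS : μ ∈ S y := ⟨⟨hμmem.1, h2⟩, hyU⟩
        have h4 := hle y μ hμS
        rw [hmx]
        simp only [hμ] at h4
        linarith
      · push_neg at h2
        calc m y ≤ η₀ := hm_le y
          _ ≤ lam + dist x y + ε / 2 := h2
          _ ≤ m x + dist x y + ε := by rw [hmx]; linarith
    · have hmx : m x = η₀ := by simp only [hm]; rw [dif_neg h]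
      have hd : (0:ℝ) ≤ dist x y := dist_nonneg
      calc m y ≤ η₀ := hm_le y
        _ ≤ m x + dist x y + ε := by rw [hmx]; linarith
  have hlip : LipschitzWith 1 m := by
    apply LipschitzWith.of_dist_le_mul
    intro x y
    rw [Real.dist_eq, NNReal.coe_one, one_mul, abs_sub_le_iff]
    constructor
    · have h1 := key y x
      rw [dist_comm y x] at h1
      linarith
    · have h1 := key x y
      linarith
  have hex : ∀ x, (∃ lam ∈ Ioo (0:ℝ) η₀, x ∈ U lam) ↔ (S x).Nonempty := by
    intro x
    constructor
    · rintro ⟨lam, h1, h2⟩; exact ⟨lam, h1, h2⟩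
    · rintro ⟨lam, h1, h2⟩; exact ⟨lam, h1, h2⟩
  have hlm : ∀ x, l x = m x / η₀ := by
    intro x
    rw [hl x]
    by_cases h : (S x).Nonempty
    · rw [if_pos ((hex x).mpr h)]
      simp only [hm]
      rw [dif_pos h]
    · rw [if_neg (fun hc => h ((hex x).mp hc))]
      simp only [hm]
      rw [dif_neg h, div_self (ne_of_gt hη₀0)]
  refine ⟨?_, ?_, ?_, ?_⟩
  · have : l = fun x => m x / η₀ := funext hlm
    rw [this]
    exact hlip.continuous.div_const _
  · intro x hx
    have hSx : S x = Ioo (0:ℝ) η₀ := by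
      ext lam
      constructor
      · exact fun h => h.1
      · intro h
        exact ⟨h, hBU lam ⟨h.1, lt_trans h.2 hη₀1⟩ hx⟩
    have hmx : m x = 0 := by
      simp only [hm]
      rw [dif_pos (by rw [hSx]; exact nonempty_Ioo.mpr hη₀0)]
      rw [hSx, csInf_Ioo hη₀0]
    rw [hlm x, hmx, zero_div]
  · intro x
    rw [hlm x]
    constructor
    · exact div_nonneg (hm_nonneg x) hη₀0.le
    · rw [div_le_one hη₀0]
      exact hm_le x
  · intro x hx
    rw [hl x, if_neg]
    rintro ⟨lam, h1, h2⟩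
    exact hx (mem_biUnion h1 h2)
end
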